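/- Discrete Friedrichs inequality in ℓ¹ on a non-uniform mesh: Let L ≥ 1, ε⁰, ε¹ ∈ ℝ^L with positive entries, f ∈ ℝ^L with f₁ = f_L = 0, and f'ᵢ = (fᵢ - f_{i-1})/ε¹ᵢ for i = 2,…,L. Then ∑_{i=1}^L ε⁰ᵢ |fᵢ| ≤ (1/2)(L-1) · max_{2 ≤ i ≤ L-1} max{ε⁰ᵢ, ε¹ᵢ} · ∑_{j=2}^L ε¹ⱼ |f'ⱼ|. -/

import Mathlib

/-!
Write `S = ∑ⱼ |fⱼ - fⱼ₋₁|`. Telescoping from the left endpoint bounds `|fᵢ|` by the part of `S`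
left of `i`, telescoping from the right endpoint by the part right of `i`; adding the two bounds
gives `|fᵢ| ≤ S / 2` at every node. Only the `L - 2 ≤ L - 1` interior nodes contribute to the
left-hand side, each with weight `ε⁰ᵢ ≤ max ε⁰ᵢ ε¹ᵢ`, and `ε¹ⱼ |f'ⱼ| = |fⱼ - fⱼ₋₁|`.
-/

open Finset

theorem Finset.sum_Ioc_sub_pred {G : Type*} [AddCommGroup G] (f : ℕ → G) {a b : ℕ} (hab : a ≤ b) :
    ∑ j ∈ Ioc a b, (f j - f (j - 1)) = f b - f a := by
  induction b, hab using Nat.le_induction with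
  | base => simp
  | succ n hn ih => rw [sum_Ioc_succ_top hn, ih, Nat.add_sub_cancel, sub_add_sub_cancel']

theorem two_mul_norm_le_sum_norm_sub_pred {E : Type*} [SeminormedAddCommGroup E] (f : ℕ → E)
    {a i b : ℕ} (hai : a ≤ i) (hib : i ≤ b) (ha : f a = 0) (hb : f b = 0) :
    2 * ‖f i‖ ≤ ∑ j ∈ Ioc a b, ‖f j - f (j - 1)‖ := by
  have hleft : ‖f i‖ ≤ ∑ j ∈ Ioc a i, ‖f j - f (j - 1)‖ := by
    simpa [sum_Ioc_sub_pred f hai, ha] using norm_sum_le (Ioc a i) fun j ↦ f j - f (j - 1)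
  have hright : ‖f i‖ ≤ ∑ j ∈ Ioc i b, ‖f j - f (j - 1)‖ := by
    simpa [sum_Ioc_sub_pred f hib, hb] using norm_sum_le (Ioc i b) fun j ↦ f j - f (j - 1)
  rw [← sum_Ioc_consecutive _ hai hib]
  linarith

theorem Finset.le_ciSup₂_of_mem {ι α : Type*} [ConditionallyCompleteLattice α] {s : Finset ι}
    (g : ι → α) {i : ι} (hi : i ∈ s) : g i ≤ ⨆ j ∈ s, g j := by
  refine le_ciSup₂ (f := fun j (_ : j ∈ s) ↦ g j) ?_ i hi
  exact (s.finite_toSet.image g).bddAbove.mono <|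
    Set.iUnion_subset fun j ↦ Set.range_subset_iff.2 fun hj ↦ Set.mem_image_of_mem g hj

theorem mul_abs_div_of_pos {ε : ℝ} (hε : 0 < ε) (x : ℝ) : ε * |x / ε| = |x| := by
  rw [abs_div, abs_of_pos hε, mul_div_cancel₀ _ hε.ne']

theorem sum_mul_abs_le_of_vanishing_endpoints {L : ℕ} (hL : 1 ≤ L) {f w : ℕ → ℝ} {M : ℝ}
    (hf1 : f 1 = 0) (hfL : f L = 0) (hM0 : 0 ≤ M) (hw : ∀ i ∈ Icc 2 (L - 1), w i ≤ M) :
    ∑ i ∈ Icc 1 L, w i * |f i| ≤ 1 / 2 * (L - 1) * M * ∑ j ∈ Ioc 1 L, |f j - f (j - 1)| := by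
  set s := Icc 2 (L - 1)
  set S := ∑ j ∈ Ioc 1 L, |f j - f (j - 1)|
  have hs : s ⊆ Icc 1 L := Icc_subset_Icc (by norm_num) (Nat.sub_le L 1)
  have hinterior : ∑ i ∈ Icc 1 L, w i * |f i| = ∑ i ∈ s, w i * |f i| := by
    refine (sum_subset hs fun i hi his ↦ ?_).symm
    simp only [s, mem_Icc] at hi his
    obtain rfl | rfl : i = 1 ∨ i = L := by omega
    all_goals simp [hf1, hfL]
  have hterm : ∀ i ∈ s, w i * |f i| ≤ M * (S / 2) := fun i hi ↦ by
    have hf : 2 * |f i| ≤ S := by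
      simpa only [Real.norm_eq_abs] using
        two_mul_norm_le_sum_norm_sub_pred f (mem_Icc.1 (hs hi)).1 (mem_Icc.1 (hs hi)).2 hf1 hfL
    exact mul_le_mul (hw i hi) (by linarith) (abs_nonneg _) hM0
  have hcard : (#s : ℝ) ≤ L - 1 := by
    rw [Nat.card_Icc]
    norm_cast
    omega
  have hS0 : 0 ≤ S := sum_nonneg fun j _ ↦ abs_nonneg _
  calc ∑ i ∈ Icc 1 L, w i * |f i| = ∑ i ∈ s, w i * |f i| := hinterior
    _ ≤ #s • (M * (S / 2)) := sum_le_card_nsmul _ _ _ hterm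
    _ ≤ ((L : ℝ) - 1) * (M * (S / 2)) := by
      rw [nsmul_eq_mul]
      exact mul_le_mul_of_nonneg_right hcard (by positivity)
    _ = 1 / 2 * (L - 1) * M * S := by ring

/-- Discrete Friedrichs inequality (ℓ¹ version) on a non-uniform mesh. -/
theorem discrete_friedrichs_l1 (L : ℕ) (hL : 1 ≤ L) (f ε0 ε1 : ℕ → ℝ)
    (hε0 : ∀ i ∈ Finset.Icc 1 L, 0 < ε0 i)
    (hε1 : ∀ i ∈ Finset.Icc 1 L, 0 < ε1 i)
    (hf1 : f 1 = 0) (hfL : f L = 0) :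
    ∑ i ∈ Finset.Icc 1 L, ε0 i * |f i| ≤
      (1 / 2) * ((L : ℝ) - 1) *
        (⨆ i ∈ Finset.Icc 2 (L - 1), max (ε0 i) (ε1 i)) *
        ∑ j ∈ Finset.Icc 2 L, ε1 j * |(f j - f (j - 1)) / ε1 j| := by
  set M := ⨆ i ∈ Icc 2 (L - 1), max (ε0 i) (ε1 i)
  have hinterior : Icc 2 (L - 1) ⊆ Icc 1 L := Icc_subset_Icc (by norm_num) (Nat.sub_le L 1)
  have hM0 : 0 ≤ M := Real.iSup_nonneg fun i ↦ Real.iSup_nonneg fun hi ↦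
    (hε0 i (hinterior hi)).le.trans (le_max_left _ _)
  have hε0M : ∀ i ∈ Icc 2 (L - 1), ε0 i ≤ M := fun i hi ↦
    (le_max_left _ _).trans (le_ciSup₂_of_mem (fun j ↦ max (ε0 j) (ε1 j)) hi)
  have hrhs : ∑ j ∈ Icc 2 L, ε1 j * |(f j - f (j - 1)) / ε1 j| =
      ∑ j ∈ Ioc 1 L, |f j - f (j - 1)| :=
    sum_congr (Icc_add_one_left_eq_Ioc 1 L) fun j hj ↦
      mul_abs_div_of_pos (hε1 j (Icc_subset_Icc_left (by norm_num) hj)) _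
  rw [hrhs]
  exact sum_mul_abs_le_of_vanishing_endpoints hL hf1 hfL hM0 hε0M
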